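/- For a function z : {0,1}^3 → ℝ that is invariant under global bit complementation (z_s = z_{¬s} for all s), there exist edge weights w_ab, w_ac, w_bc and a constant c such that for all s ∈ {0,1}^3, z_s = w_ab·[s_a ≠ s_b] + w_ac·[s_a ≠ s_c] + w_bc·[s_b ≠ s_c] + c; explicitly c = z_{000}, w_ab + w_ac = z_{100} - z_{000}, w_ab + w_bc = z_{010} - z_{000}, w_ac + w_bc = z_{001} - z_{000}, and this 3×3 system in (w_ab, w_ac, w_bc) is uniquely solvable. -/

import Mathlib

/-!
Complement invariance leaves only four free values, `z 000` and the three values at the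
weight-one strings; every string of weight two is the complement of one of weight one. A cut
function `wab [a ≠ b] + wac [a ≠ c] + wbc [b ≠ c] + cst` is complement invariant as well, and it
takes the value `cst` at `000` and `cst` plus the two weights of the edges cut by a singleton at the
weight-one strings. Matching these four values is the pairwise-sum system for the weights, which
is solved by `wab = (r₁ + r₂ - r₃) / 2` and its cyclic analogues.
-/

theorem existsUnique_pairwise_add_eq {K : Type*} [Field K] [NeZero (2 : K)] (r₁ r₂ r₃ : K) :
    ∃! w : K × K × K, w.1 + w.2.1 = r₁ ∧ w.1 + w.2.2 = r₂ ∧ w.2.1 + w.2.2 = r₃ := by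
  have h2 : (2 : K) ≠ 0 := two_ne_zero
  refine ⟨((r₁ + r₂ - r₃) / 2, (r₁ + r₃ - r₂) / 2, (r₂ + r₃ - r₁) / 2), ?_, ?_⟩
  · refine ⟨?_, ?_, ?_⟩ <;> field_simp <;> ring
  · rintro ⟨x, y, t⟩ ⟨h₁, h₂, h₃⟩
    exact Prod.ext (eq_div_of_mul_eq h2 (by linear_combination h₁ + h₂ - h₃)) <|
      Prod.ext (eq_div_of_mul_eq h2 (by linear_combination h₁ + h₃ - h₂))
        (eq_div_of_mul_eq h2 (by linear_combination h₂ + h₃ - h₁))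

theorem eq_cut_of_complement_invariant {R : Type*} [CommRing R] (z : Bool → Bool → Bool → R)
    (hinv : ∀ a b c, z a b c = z (!a) (!b) (!c)) {wab wac wbc : R}
    (hab : wab + wac = z true false false - z false false false)
    (hac : wab + wbc = z false true false - z false false false)
    (hbc : wac + wbc = z false false true - z false false false) (a b c : Bool) :
    z a b c = wab * (if a ≠ b then (1 : R) else 0) + wac * (if a ≠ c then (1 : R) else 0)
      + wbc * (if b ≠ c then (1 : R) else 0) + z false false false := by
  have at_false : ∀ b c, z false b c = wab * (if false ≠ b then (1 : R) else 0)
      + wac * (if false ≠ c then (1 : R) else 0) + wbc * (if b ≠ c then (1 : R) else 0)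
      + z false false false := by
    intro b c
    cases b <;> cases c <;>
      simp only [ne_eq, Bool.false_eq_true, Bool.true_eq_false, not_false_eq_true, not_true_eq_false,
        if_true, if_false, mul_one, mul_zero, add_zero, zero_add]
    · linear_combination -hbc
    · linear_combination -hac
    · rw [hinv]
      simp only [Bool.not_false, Bool.not_true]
      linear_combination -hab
  cases a
  · exact at_false b c
  · -- both sides are complement invariant, so the case `a = true` reduces to `a = false`
    rw [hinv true b c, Bool.not_true, at_false (!b) (!c)]
    simp

/-- Any function `z : {0,1}³ → ℝ` invariant under global bit
complementation is exactly representable by three edge weights plus a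
constant, with the explicit formulas; the underlying 3×3 system is uniquely
solvable. -/
theorem stmt_14 (z : Bool → Bool → Bool → ℝ)
    (hinv : ∀ a b c, z a b c = z (!a) (!b) (!c)) :
    (∃ wab wac wbc cst : ℝ,
      (∀ a b c, z a b c = wab * (if a ≠ b then (1 : ℝ) else 0)
          + wac * (if a ≠ c then (1 : ℝ) else 0)
          + wbc * (if b ≠ c then (1 : ℝ) else 0) + cst) ∧
      cst = z false false false ∧
      wab + wac = z true false false - z false false false ∧
      wab + wbc = z false true false - z false false false ∧
      wac + wbc = z false false true - z false false false) ∧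
    ∀ r1 r2 r3 : ℝ, ∃! w : ℝ × ℝ × ℝ,
      w.1 + w.2.1 = r1 ∧ w.1 + w.2.2 = r2 ∧ w.2.1 + w.2.2 = r3 := by
  obtain ⟨⟨wab, wac, wbc⟩, ⟨hab, hac, hbc⟩, -⟩ := existsUnique_pairwise_add_eq
    (z true false false - z false false false) (z false true false - z false false false)
    (z false false true - z false false false)
  exact ⟨⟨wab, wac, wbc, z false false false,
    eq_cut_of_complement_invariant z hinv hab hac hbc, rfl, hab, hac, hbc⟩,
    existsUnique_pairwise_add_eq⟩
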